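/- Let A be a unital associative k-algebra and α, β ∈ k with α ≠ 0 and β ≠ 0. Then the linear map R : A ⊗ A → A ⊗ A defined by R(a ⊗ b) = α·ab ⊗ 1 + β·1 ⊗ ab − β·a ⊗ b satisfies the braid equation R¹² ∘ R²³ ∘ R¹² = R²³ ∘ R¹² ∘ R²³. -/

import Mathlib

open TensorProduct

noncomputable def r12 (k V : Type*) [Field k] [AddCommGroup V] [Module k V]
    (R : V ⊗[k] V →ₗ[k] V ⊗[k] V) :
    (V ⊗[k] V) ⊗[k] V →ₗ[k] (V ⊗[k] V) ⊗[k] V :=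
  TensorProduct.map R LinearMap.id

noncomputable def r23 (k V : Type*) [Field k] [AddCommGroup V] [Module k V]
    (R : V ⊗[k] V →ₗ[k] V ⊗[k] V) :
    (V ⊗[k] V) ⊗[k] V →ₗ[k] (V ⊗[k] V) ⊗[k] V :=
  (TensorProduct.assoc k V V V).symm.toLinearMap ∘ₗ
    TensorProduct.map LinearMap.id R ∘ₗ (TensorProduct.assoc k V V V).toLinearMap

noncomputable def tau (k V : Type*) [Field k] [AddCommGroup V] [Module k V] :
    V ⊗[k] V →ₗ[k] V ⊗[k] V :=
  (TensorProduct.comm k V V).toLinearMap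

noncomputable def r13 (k V : Type*) [Field k] [AddCommGroup V] [Module k V]
    (R : V ⊗[k] V →ₗ[k] V ⊗[k] V) :
    (V ⊗[k] V) ⊗[k] V →ₗ[k] (V ⊗[k] V) ⊗[k] V :=
  r23 k V (tau k V) ∘ₗ r12 k V R ∘ₗ r23 k V (tau k V)

/-- The braid equation. -/
def IsBraid (k V : Type*) [Field k] [AddCommGroup V] [Module k V]
    (R : V ⊗[k] V →ₗ[k] V ⊗[k] V) : Prop :=
  r12 k V R ∘ₗ r23 k V R ∘ₗ r12 k V R = r23 k V R ∘ₗ r12 k V R ∘ₗ r23 k V R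

/-- The (constant) quantum Yang–Baxter equation. -/
def IsQYBE (k V : Type*) [Field k] [AddCommGroup V] [Module k V]
    (R : V ⊗[k] V →ₗ[k] V ⊗[k] V) : Prop :=
  r12 k V R ∘ₗ r13 k V R ∘ₗ r23 k V R = r23 k V R ∘ₗ r13 k V R ∘ₗ r12 k V R

/-!
Both sides are evaluated on pure tensors `a ⊗ b ⊗ c`. Because `R (1 ⊗ x) = α • x ⊗ 1`, many of
the 27 terms of each triple composite collapse, and both sides reduce to the same combination of
nine tensors, the middle term of the `calc` below.
-/

section Legs

variable {k V : Type*} [Field k] [AddCommGroup V] [Module k V] (R : V ⊗[k] V →ₗ[k] V ⊗[k] V)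

theorem r12_tmul (x : V ⊗[k] V) (c : V) : r12 k V R (x ⊗ₜ c) = R x ⊗ₜ c := rfl

theorem r23_tmul (a b c : V) :
    r23 k V R ((a ⊗ₜ b) ⊗ₜ c) = (TensorProduct.assoc k V V V).symm (a ⊗ₜ R (b ⊗ₜ c)) := rfl

end Legs

section Algebra

variable {k A : Type*} [Field k] [Ring A] [Algebra k A] {α β : k} {R : A ⊗[k] A →ₗ[k] A ⊗[k] A}

theorem r12_tmul_tmul
    (hR : ∀ a b : A, R (a ⊗ₜ b) =
      α • ((a * b) ⊗ₜ (1 : A)) + β • ((1 : A) ⊗ₜ (a * b)) - β • (a ⊗ₜ b)) (a b c : A) :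
    r12 k A R ((a ⊗ₜ b) ⊗ₜ c) =
      α • ((a * b) ⊗ₜ 1) ⊗ₜ c + β • ((1 : A) ⊗ₜ (a * b)) ⊗ₜ c - β • (a ⊗ₜ b) ⊗ₜ c := by
  rw [r12_tmul, hR, sub_tmul, add_tmul, ← smul_tmul', ← smul_tmul', ← smul_tmul']

theorem r23_tmul_tmul
    (hR : ∀ a b : A, R (a ⊗ₜ b) =
      α • ((a * b) ⊗ₜ (1 : A)) + β • ((1 : A) ⊗ₜ (a * b)) - β • (a ⊗ₜ b)) (a b c : A) :
    r23 k A R ((a ⊗ₜ b) ⊗ₜ c) =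
      α • (a ⊗ₜ (b * c)) ⊗ₜ 1 + β • (a ⊗ₜ (1 : A)) ⊗ₜ (b * c) - β • (a ⊗ₜ b) ⊗ₜ c := by
  simp only [r23_tmul, hR, tmul_sub, tmul_add, tmul_smul, map_sub, map_add, map_smul,
    assoc_symm_tmul]

end Algebra

theorem braid_of_algebra_case_ii_general
    (k A : Type*) [Field k] [Ring A] [Algebra k A]
    (α β : k)
    (R : A ⊗[k] A →ₗ[k] A ⊗[k] A)
    (hR : ∀ a b : A, R (a ⊗ₜ b) =
      α • ((a * b) ⊗ₜ (1 : A)) + β • ((1 : A) ⊗ₜ (a * b)) - β • (a ⊗ₜ b)) :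
    IsBraid k A R := by
  refine TensorProduct.ext_threefold fun a b c => ?_
  simp only [LinearMap.comp_apply]
  calc r12 k A R (r23 k A R (r12 k A R ((a ⊗ₜ b) ⊗ₜ c)))
      = α ^ 3 • ((a * b * c) ⊗ₜ 1) ⊗ₜ 1 + (α ^ 2 * β - α * β ^ 2) • ((1 : A) ⊗ₜ (a * b * c)) ⊗ₜ 1
        + (α * β ^ 2) • ((1 : A) ⊗ₜ 1) ⊗ₜ (a * b * c) - (α ^ 2 * β) • ((a * b) ⊗ₜ c) ⊗ₜ 1
        + (α * β ^ 2) • (a ⊗ₜ (b * c)) ⊗ₜ 1 + (β ^ 3 - α * β ^ 2) • (a ⊗ₜ 1) ⊗ₜ (b * c)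
        - β ^ 3 • ((1 : A) ⊗ₜ a) ⊗ₜ (b * c) + β ^ 3 • ((1 : A) ⊗ₜ (a * b)) ⊗ₜ c
        - β ^ 3 • (a ⊗ₜ b) ⊗ₜ c := by
        simp only [r12_tmul_tmul hR, r23_tmul_tmul hR, map_add, map_sub, map_smul, one_mul,
          mul_one, mul_assoc]
        module
    _ = r23 k A R (r12 k A R (r23 k A R ((a ⊗ₜ b) ⊗ₜ c))) := by
        simp only [r12_tmul_tmul hR, r23_tmul_tmul hR, map_add, map_sub, map_smul, one_mul,
          mul_one, mul_assoc]
        module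

theorem braid_of_algebra_case_ii
    (k A : Type*) [Field k] [Ring A] [Algebra k A]
    (α β : k) (hα : α ≠ 0) (hβ : β ≠ 0)
    (R : A ⊗[k] A →ₗ[k] A ⊗[k] A)
    (hR : ∀ a b : A, R (a ⊗ₜ b) =
      α • ((a * b) ⊗ₜ (1 : A)) + β • ((1 : A) ⊗ₜ (a * b)) - β • (a ⊗ₜ b)) :
    IsBraid k A R :=
  braid_of_algebra_case_ii_general k A α β R hR
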